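/- Let p, u, v, g, z, h, r be real numbers. Define F : ℝ³ → Matrix 3 3 ℝ by F(y) = [[p, u, v + u·y₁ + p·y₂], [−u, −p, g − p·y₁ − u·y₂], [z − u·y₁ + p·y₂, h − p·y₁ + u·y₂, r + (g+h)·y₁ + (v+z)·y₂ + p·(y₂² − y₁²)]], and let G(y) = (F(y) + F(y)ᵀ)/2 be its symmetric part. Then G(y) is invertible for every y ∈ ℝ³ if and only if p·(4·p·r + (g+h)² − (v+z)²) ≠ 0. -/
import Mathlib


open Matrix

/-- The tensor `F` of the sigma model on the Manin triple `(6₀|1)`. -/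
noncomputable def F601 (p u v g z h r : ℝ) (y : Fin 3 → ℝ) : Matrix (Fin 3) (Fin 3) ℝ :=
  !![p,                     u,                     v + u * y 0 + p * y 1;
     -u,                    -p,                    g - p * y 0 - u * y 1;
     z - u * y 0 + p * y 1, h - p * y 0 + u * y 1,
       r + (g + h) * y 0 + (v + z) * y 1 + p * ((y 1) ^ 2 - (y 0) ^ 2)]

/-- The metric of the `(6₀|1)` sigma model is invertible everywhere iff
`p·(4·p·r + (g+h)² − (v+z)²) ≠ 0`. -/
theorem metric601_invertible_iff (p u v g z h r : ℝ) :
    (∀ y : Fin 3 → ℝ,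
        IsUnit ((1 / 2 : ℝ) • (F601 p u v g z h r y + (F601 p u v g z h r y)ᵀ))) ↔
      p * (4 * p * r + (g + h) ^ 2 - (v + z) ^ 2) ≠ 0 := by
  have key : ∀ y : Fin 3 → ℝ,
      ((1 / 2 : ℝ) • (F601 p u v g z h r y + (F601 p u v g z h r y)ᵀ)).det
        = -(1/4) * (p * (4 * p * r + (g + h) ^ 2 - (v + z) ^ 2)) := by
    intro y
    have hG : (1 / 2 : ℝ) • (F601 p u v g z h r y + (F601 p u v g z h r y)ᵀ)
        = !![p, 0, (v + z) / 2 + p * y 1;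
             0, -p, (g + h) / 2 - p * y 0;
             (v + z) / 2 + p * y 1, (g + h) / 2 - p * y 0,
               r + (g + h) * y 0 + (v + z) * y 1 + p * ((y 1) ^ 2 - (y 0) ^ 2)] := by
      ext i j
      fin_cases i <;> fin_cases j <;>
        simp [F601, Matrix.smul_apply, Matrix.add_apply, Matrix.transpose_apply,
          Matrix.vecHead, Matrix.vecTail] <;> ring
    rw [hG]
    simp [Matrix.det_fin_three]
    ring
  constructor
  · intro h' hc
    have := h' 0
    rw [Matrix.isUnit_iff_isUnit_det, isUnit_iff_ne_zero, key] at this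
    exact this (by rw [hc]; ring)
  · intro h' y
    rw [Matrix.isUnit_iff_isUnit_det, isUnit_iff_ne_zero, key]
    intro hc
    exact h' (by linarith)
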